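/- arXiv:2508.02564 — 3 statements merged into one kernel-verified Lean document; each statement's English description precedes it below -/
import Mathlib

section
/- Let G be a unicyclic graph with girth g ≥ 5 and let r be the number of vertices of G with degree at most 2. Then the 2-leaky forcing number of G equals r. -/
open SimpleGraph

namespace LF

variable {V : Type*}

/-- Vertices eventually forced blue, starting from `S`, with leak set `L`:
a blue vertex not in `L` whose every neighbor other than `w` is blue forces `w`. -/
inductive Forced (G : SimpleGraph V) (L S : Set V) : V → Prop
  | init (v : V) (hv : v ∈ S) : Forced G L S v
  | force (b w : V) (hb : Forced G L S b) (hbL : b ∉ L) (hadj : G.Adj b w)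
      (hall : ∀ u, G.Adj b u → u ≠ w → Forced G L S u) : Forced G L S w

/-- `S` is an ℓ-leaky forcing set of `G`. -/
def IsLeakyForcingSet (G : SimpleGraph V) (ℓ : ℕ) (S : Set V) : Prop :=
  ∀ L : Set V, L.ncard ≤ ℓ → ∀ v, Forced G L S v

/-- The ℓ-leaky forcing number `Z_{(ℓ)}(G)`. -/
noncomputable def leakyForcingNumber (G : SimpleGraph V) [Fintype V] (ℓ : ℕ) : ℕ :=
  sInf {k | ∃ S : Finset V, S.card = k ∧ IsLeakyForcingSet G ℓ ↑S}

/-- An ℓ-leaky fort: a nonempty set `F` such that at most ℓ vertices outside `F`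
have exactly one neighbor in `F`. -/
def IsLeakyFort (G : SimpleGraph V) (ℓ : ℕ) (F : Set V) : Prop :=
  F.Nonempty ∧ {v | v ∉ F ∧ ∃! u, u ∈ F ∧ G.Adj v u}.ncard ≤ ℓ

/-- The path graph on `n` vertices. -/
def pathGraph (n : ℕ) : SimpleGraph (Fin n) :=
  SimpleGraph.fromRel (fun i j => i.val + 1 = j.val)

/-- The cycle graph on `n` vertices. -/
def cycleGraph (n : ℕ) : SimpleGraph (Fin n) :=
  SimpleGraph.fromRel (fun i j => (i.val + 1) % n = j.val)

/-- The star graph on `n` vertices, with center `0`. -/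
def starGraph (n : ℕ) : SimpleGraph (Fin n) :=
  SimpleGraph.fromRel (fun i _ => i.val = 0)

/-- The generalized Petersen graph `P(n,k)`: `Sum.inl i` is the inner vertex `x_{i+1}`,
`Sum.inr i` is the outer vertex `y_{i+1}` (0-indexed). -/
def petersen (n k : ℕ) : SimpleGraph (Fin n ⊕ Fin n) :=
  SimpleGraph.fromRel (fun a b =>
    match a, b with
    | Sum.inr i, Sum.inr j => (i.val + 1) % n = j.val
    | Sum.inl i, Sum.inr j => i = j
    | Sum.inl i, Sum.inl j => (i.val + k) % n = j.val
    | _, _ => False)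

end LF

/-!
A vertex of degree at most two lies in every 2-leaky forcing set: leak all its neighbours.
Conversely, start from these vertices and suppose some vertex stays white for a leak set `L`.
The white set `W` consists of vertices of degree at least three, and every vertex outside `W` with
exactly one neighbour in `W` must be a leak, so `W` is a 2-leaky fort. But there are at least
three such outside vertices: for `|W| = 1` the neighbours of its vertex; for `|W| = 2` girth at
least five rules out common neighbours; for `|W| ≥ 3` a degree count, using that the graph has as
many edges as vertices, gives at least `|W|` of them.
-/

open Finset

namespace SimpleGraph

variable {V : Type*} {G : SimpleGraph V}

lemma girth_le_three_of_adj {a b c : V} (hab : G.Adj a b) (hbc : G.Adj b c) (hca : G.Adj c a) :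
    G.girth ≤ 3 := by
  have hw : (Walk.cons hab (.cons hbc (.cons hca .nil))).IsCycle := by
    simp [Walk.cons_isCycle_iff, hab.ne, hbc.ne, hca.ne, hab.ne.symm, hca.ne.symm]
  simpa using girth_le_length hw

lemma girth_le_four_of_adj {a b c d : V} (hab : G.Adj a b) (hbc : G.Adj b c) (hcd : G.Adj c d)
    (hda : G.Adj d a) (hac : a ≠ c) (hbd : b ≠ d) : G.girth ≤ 4 := by
  have hw : (Walk.cons hab (.cons hbc (.cons hcd (.cons hda .nil)))).IsCycle := by
    simp [Walk.cons_isCycle_iff, hab.ne, hbc.ne, hcd.ne, hda.ne, hab.ne.symm, hda.ne.symm, hac,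
      hbd, hac.symm]
  simpa using girth_le_length hw

lemma exists_adj_inf'_dist_lt (hconn : G.Connected) {W : Finset V} (hW : W.Nonempty) {v : V}
    (hv : v ∉ W) : ∃ u, G.Adj v u ∧ W.inf' hW (G.dist u) < W.inf' hW (G.dist v) := by
  obtain ⟨w, hw, hvw⟩ := W.exists_mem_eq_inf' hW (G.dist v)
  obtain ⟨p, hp⟩ := hconn.exists_walk_length_eq_dist v w
  cases p with
  | nil => exact absurd hw hv
  | cons h q =>
    refine ⟨_, h, ?_⟩
    calc W.inf' hW (G.dist _) ≤ G.dist _ w := inf'_le _ hw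
      _ ≤ q.length := dist_le q
      _ < (Walk.cons h q).length := by simp
      _ = W.inf' hW (G.dist v) := by rw [hp, hvw]

variable [Fintype V] [DecidableEq V] [DecidableRel G.Adj]

lemma card_neighborFinset_inter_insert_le_one (hg : 5 ≤ G.girth) {u v : V} (huv : u ≠ v) :
    #(G.neighborFinset u ∩ insert v (G.neighborFinset v)) ≤ 1 := by
  refine card_le_one.mpr fun x hx y hy => ?_
  simp only [mem_inter, mem_insert, mem_neighborFinset] at hx hy
  by_contra hxy
  rcases hx with ⟨hux, rfl | hvx⟩ <;> rcases hy with ⟨huy, rfl | hvy⟩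
  · exact hxy rfl
  · have := girth_le_three_of_adj hux hvy huy.symm; omega
  · have := girth_le_three_of_adj huy hvx hux.symm; omega
  · have := girth_le_four_of_adj hux hvx.symm hvy huy.symm huv hxy; omega

variable (G) in
def outsideWithUniqueNeighbor (W : Finset V) : Finset V :=
  Wᶜ.filter fun v => #(W.filter (G.Adj v)) = 1

lemma mem_outsideWithUniqueNeighbor_pair {u v x : V} (hux : G.Adj u x) (hxv : x ≠ v)
    (hvx : ¬ G.Adj v x) : x ∈ G.outsideWithUniqueNeighbor {u, v} := by
  have hfilter : ({u, v} : Finset V).filter (G.Adj x) = {u} := by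
    ext y
    simp only [mem_filter, mem_insert, mem_singleton]
    constructor
    · rintro ⟨rfl | rfl, hxy⟩
      · rfl
      · exact absurd hxy.symm hvx
    · rintro rfl
      exact ⟨Or.inl rfl, hux.symm⟩
  simp [outsideWithUniqueNeighbor, hfilter, hux.ne', hxv]

lemma two_le_card_neighborFinset_sdiff_insert (hg : 5 ≤ G.girth) {u v : V} (huv : u ≠ v)
    (hu : 3 ≤ G.degree u) :
    2 ≤ #(G.neighborFinset u \ insert v (G.neighborFinset v)) := by
  have := card_sdiff_add_card_inter (G.neighborFinset u) (insert v (G.neighborFinset v))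
  have := card_neighborFinset_inter_insert_le_one hg huv
  rw [card_neighborFinset_eq_degree] at *
  omega

lemma three_le_card_outsideWithUniqueNeighbor_pair (hg : 5 ≤ G.girth) {u v : V} (huv : u ≠ v)
    (hu : 3 ≤ G.degree u) (hv : 3 ≤ G.degree v) :
    3 ≤ #(G.outsideWithUniqueNeighbor {u, v}) := by
  let Nu := G.neighborFinset u \ insert v (G.neighborFinset v)
  let Nv := G.neighborFinset v \ insert u (G.neighborFinset u)
  have hsub : Nu ∪ Nv ⊆ G.outsideWithUniqueNeighbor {u, v} := by
    intro x hx
    simp only [Nu, Nv, mem_union, mem_sdiff, mem_insert, mem_neighborFinset, not_or] at hx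
    rcases hx with ⟨hux, hxv, hvx⟩ | ⟨hvx, hxu, hux⟩
    · exact mem_outsideWithUniqueNeighbor_pair hux hxv hvx
    · rw [pair_comm]
      exact mem_outsideWithUniqueNeighbor_pair hvx hxu hux
  have hdisj : Disjoint Nu Nv := by
    refine Finset.disjoint_left.mpr fun x hxu hxv => ?_
    simp only [Nu, Nv, mem_sdiff, mem_insert, mem_neighborFinset, not_or] at hxu hxv
    exact hxu.2.2 hxv.1
  have hNu : 2 ≤ #Nu := two_le_card_neighborFinset_sdiff_insert hg huv hu
  have hNv : 2 ≤ #Nv := two_le_card_neighborFinset_sdiff_insert hg huv.symm hv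
  have := card_le_card hsub
  rw [card_union_of_disjoint hdisj] at this
  omega

lemma degree_eq_card_filter_add_card_filter_compl (W : Finset V) (v : V) :
    G.degree v = #(W.filter (G.Adj v)) + #(Wᶜ.filter (G.Adj v)) := by
  rw [← card_union_of_disjoint (disjoint_filter_filter disjoint_compl_right), ← filter_union,
    union_compl, ← card_neighborFinset_eq_degree, neighborFinset_eq_filter]

/-- Each vertex at distance at least two from `W` owns the two darts of the first edge of a
shortest path to `W`; these darts avoid `W` and are pairwise distinct. -/
lemma two_mul_card_far_le_sum_card_filter_compl (hconn : G.Connected) {W : Finset V}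
    (hW : W.Nonempty) :
    2 * #(Wᶜ.filter fun v => #(W.filter (G.Adj v)) = 0) ≤
      ∑ v ∈ Wᶜ, #(Wᶜ.filter (G.Adj v)) := by
  set R := Wᶜ.filter fun v => #(W.filter (G.Adj v)) = 0
  let d : V → ℕ := fun v => W.inf' hW (G.dist v)
  choose! p hp using fun v (hv : v ∉ W) => exists_adj_inf'_dist_lt hconn hW hv
  have hpR : ∀ v ∈ R, v ∉ W ∧ p v ∉ W ∧ G.Adj v (p v) ∧ d (p v) < d v := by
    intro v hv
    simp only [R, mem_filter, mem_compl, card_eq_zero, filter_eq_empty_iff] at hv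
    exact ⟨hv.1, fun h => hv.2 h (hp v hv.1).1, hp v hv.1⟩
  let dart : V ⊕ V → Σ _ : V, V := Sum.elim (fun v => ⟨v, p v⟩) (fun v => ⟨p v, v⟩)
  have hmaps : Set.MapsTo dart ↑(R.disjSum R) ↑(Wᶜ.sigma fun v => Wᶜ.filter (G.Adj v)) := by
    rintro (v | v) hv <;>
    · obtain ⟨hvW, hpW, hadj, -⟩ := hpR v (by simpa using hv)
      simp [dart, hvW, hpW, hadj, hadj.symm]
  have hinj : Set.InjOn dart ↑(R.disjSum R) := by
    rintro (v | v) hv (w | w) hw h <;>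
      simp only [dart, Sum.elim_inl, Sum.elim_inr, Sigma.mk.injEq, heq_eq_eq] at h
    · rw [h.1]
    · have := (hpR v (by simpa using hv)).2.2.2
      have := (hpR w (by simpa using hw)).2.2.2
      rw [h.1, h.2] at *
      omega
    · have := (hpR v (by simpa using hv)).2.2.2
      have := (hpR w (by simpa using hw)).2.2.2
      rw [h.1, h.2] at *
      omega
    · rw [h.2]
  calc 2 * #R = #(R.disjSum R) := by rw [card_disjSum]; ring
    _ ≤ #(Wᶜ.sigma fun v => Wᶜ.filter (G.Adj v)) := card_le_card_of_injOn dart hmaps hinj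
    _ = ∑ v ∈ Wᶜ, #(Wᶜ.filter (G.Adj v)) := card_sigma _ _

/-- Writing `a v` for the number of neighbours of `v` in `W`, the degree sum `2|E| ≤ 2|V|` is at
least `3|W| + ∑_{v ∉ W} a v + 2 |{v ∉ W | a v = 0}|`, and every `v ∉ W` with `a v ≠ 1` contributes
at least `2` to the last two terms. -/
theorem card_le_card_outsideWithUniqueNeighbor (hconn : G.Connected)
    (hE : #G.edgeFinset ≤ Fintype.card V) {W : Finset V} (hW : W.Nonempty)
    (hdeg : ∀ w ∈ W, 3 ≤ G.degree w) : #W ≤ #(G.outsideWithUniqueNeighbor W) := by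
  have hfar := two_mul_card_far_le_sum_card_filter_compl hconn hW
  set R := Wᶜ.filter fun v => #(W.filter (G.Adj v)) = 0
  have hinside : 3 * #W ≤ ∑ w ∈ W, G.degree w := by
    rw [mul_comm, ← smul_eq_mul, ← sum_const]
    exact sum_le_sum hdeg
  have houtside : 2 * #Wᶜ ≤
      ∑ v ∈ Wᶜ, #(W.filter (G.Adj v)) + 2 * #R + #(G.outsideWithUniqueNeighbor W) := by
    simp only [R, outsideWithUniqueNeighbor, card_filter, mul_sum, ← sum_add_distrib]
    rw [mul_comm, ← smul_eq_mul, ← sum_const]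
    refine sum_le_sum fun v _ => ?_
    split_ifs <;> omega
  have hsplit : ∑ v ∈ Wᶜ, G.degree v =
      ∑ v ∈ Wᶜ, #(W.filter (G.Adj v)) + ∑ v ∈ Wᶜ, #(Wᶜ.filter (G.Adj v)) := by
    rw [← sum_add_distrib]
    exact sum_congr rfl fun v _ => degree_eq_card_filter_add_card_filter_compl W v
  have htotal := G.sum_degrees_eq_twice_card_edges
  rw [← sum_add_sum_compl W] at htotal
  have := card_add_card_compl W
  omega

lemma neighborFinset_subset_outsideWithUniqueNeighbor_singleton (w : V) :
    G.neighborFinset w ⊆ G.outsideWithUniqueNeighbor {w} := by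
  intro x hx
  rw [mem_neighborFinset] at hx
  simp [outsideWithUniqueNeighbor, filter_singleton, hx.symm, hx.ne']

theorem three_le_card_outsideWithUniqueNeighbor (hconn : G.Connected)
    (hE : #G.edgeFinset ≤ Fintype.card V) (hg : 5 ≤ G.girth) {W : Finset V} (hW : W.Nonempty)
    (hdeg : ∀ w ∈ W, 3 ≤ G.degree w) : 3 ≤ #(G.outsideWithUniqueNeighbor W) := by
  obtain hsmall | hbig := Nat.lt_or_ge #W 3
  · interval_cases hcard : #W
    · exact absurd (card_pos.mpr hW) (by omega)
    · obtain ⟨w, rfl⟩ := card_eq_one.mp hcard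
      calc 3 ≤ G.degree w := hdeg w (mem_singleton_self w)
        _ = #(G.neighborFinset w) := (card_neighborFinset_eq_degree G w).symm
        _ ≤ _ := card_le_card (neighborFinset_subset_outsideWithUniqueNeighbor_singleton w)
    · obtain ⟨u, v, huv, rfl⟩ := card_eq_two.mp hcard
      exact three_le_card_outsideWithUniqueNeighbor_pair hg huv (hdeg u (by simp))
        (hdeg v (by simp))
  · exact hbig.trans (card_le_card_outsideWithUniqueNeighbor hconn hE hW hdeg)

end SimpleGraph

namespace LF

variable {V : Type*} {G : SimpleGraph V} {L S : Set V} {ℓ : ℕ}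

lemma Forced.exists_adj_notMem {v : V} (h : Forced G L S v) (hv : v ∉ S) :
    ∃ b ∉ L, G.Adj b v := by
  cases h with
  | init _ hvS => exact absurd hvS hv
  | force b _ _ hbL hadj _ => exact ⟨b, hbL, hadj⟩

/-- Leaking all neighbours of `v` leaves nothing able to force `v`. -/
lemma IsLeakyForcingSet.mem_of_degree_le [Fintype V] [DecidableRel G.Adj]
    (hS : IsLeakyForcingSet G ℓ S) {v : V} (hv : G.degree v ≤ ℓ) : v ∈ S := by
  by_contra hvS
  have hL : (G.neighborSet v).ncard ≤ ℓ := by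
    rwa [← coe_neighborFinset, Set.ncard_coe_finset, card_neighborFinset_eq_degree]
  obtain ⟨b, hbL, hbv⟩ := (hS _ hL v).exists_adj_notMem hvS
  exact hbL hbv.symm

lemma isLeakyFort_setOf_not_forced [Finite V] (hL : L.ncard ≤ ℓ) (h : ∃ v, ¬ Forced G L S v) :
    IsLeakyFort G ℓ {v | ¬ Forced G L S v} := by
  refine ⟨h, (Set.ncard_le_ncard ?_).trans hL⟩
  rintro b ⟨hb, u, ⟨hu, hbu⟩, huniq⟩
  by_contra hbL
  refine hu (Forced.force b u (not_not.mp hb) hbL hbu fun x hbx hxu => ?_)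
  by_contra hx
  exact hxu (huniq x ⟨hx, hbx⟩)

lemma isLeakyFort_coe_iff [Fintype V] [DecidableEq V] [DecidableRel G.Adj] {W : Finset V} :
    IsLeakyFort G ℓ ↑W ↔ W.Nonempty ∧ #(G.outsideWithUniqueNeighbor W) ≤ ℓ := by
  have hset : {v | v ∉ (W : Set V) ∧ ∃! u, u ∈ (W : Set V) ∧ G.Adj v u} =
      ↑(G.outsideWithUniqueNeighbor W) := by
    ext v
    simp [outsideWithUniqueNeighbor, card_eq_one_iff_existsUnique]
  rw [IsLeakyFort, hset, Set.ncard_coe_finset, coe_nonempty]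

theorem isLeakyForcingSet_degree_le_two [Fintype V] [DecidableEq V] [DecidableRel G.Adj]
    (hconn : G.Connected) (hE : #G.edgeFinset ≤ Fintype.card V) (hg : 5 ≤ G.girth) :
    IsLeakyForcingSet G 2 ↑(univ.filter fun v => G.degree v ≤ 2) := by
  classical
  intro L hL v
  by_contra hv
  set F := {x | ¬ Forced G L ↑(univ.filter fun v => G.degree v ≤ 2) x}
  have hfort : IsLeakyFort G 2 ↑F.toFinset := by
    rw [F.coe_toFinset]
    exact isLeakyFort_setOf_not_forced hL ⟨v, hv⟩
  rw [isLeakyFort_coe_iff] at hfort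
  have hdeg : ∀ w ∈ F.toFinset, 3 ≤ G.degree w := by
    intro w hw
    by_contra hlt
    simp only [F, Set.mem_toFinset, Set.mem_ofPred_eq] at hw
    refine hw (Forced.init w ?_)
    simp only [coe_filter, mem_univ, true_and, Set.mem_ofPred_eq]
    omega
  have := three_le_card_outsideWithUniqueNeighbor hconn hE hg hfort.1 hdeg
  omega

lemma leakyForcingNumber_eq_card [Fintype V] {T : Finset V} (hT : IsLeakyForcingSet G ℓ ↑T)
    (hmin : ∀ S : Finset V, IsLeakyForcingSet G ℓ ↑S → T ⊆ S) :
    leakyForcingNumber G ℓ = #T := by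
  refine le_antisymm (Nat.sInf_le ⟨T, rfl, hT⟩) (le_csInf ⟨_, T, rfl, hT⟩ ?_)
  rintro k ⟨S, rfl, hS⟩
  exact card_le_card (hmin S hS)

end LF

theorem stmt9 {V : Type*} [Fintype V] [DecidableEq V] (G : SimpleGraph V) [DecidableRel G.Adj]
    (hconn : G.Connected) (huni : G.edgeFinset.card = Fintype.card V)
    (hgirth : (5 : ℕ∞) ≤ G.girth) :
    LF.leakyForcingNumber G 2 =
      (Finset.univ.filter fun v => G.degree v ≤ 2).card := by
  have hg : 5 ≤ G.girth := by exact_mod_cast hgirth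
  refine LF.leakyForcingNumber_eq_card
    (LF.isLeakyForcingSet_degree_le_two hconn huni.le hg) fun S hS v hv => ?_
  exact hS.mem_of_degree_le (mem_filter.mp hv).2
end

section
/- For the generalized Petersen graph P(n,k) with n ≥ 2k and k ≥ 1, the 1-leaky forcing number satisfies Z_{(1)}(P(n,k)) ≤ 2k + 2. -/
open SimpleGraph

/-!
Take `S = {x₀, …, x_{2k-1}, y_{k-1}, y_k}` (indices mod `n`). Away from leaks, `y_m` forces
`y_{m+1}` once `y_{m-1}, x_m` are blue, and `x_m` forces `x_{m+k}` once `x_{m-k}, y_m` are blue,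
so the blue set sweeps upwards along both cycles simultaneously. `S` is invariant under the
reflection `i ↦ 2k-1-i`, an automorphism of `P(n,k)`, so it sweeps downwards as well. A single
leak lies on one spoke `{x_a, y_a}` and only stops the sweeps there: the upward sweep reaches
`a` from below, the downward one reaches `a - n` from above, and the two together cover a full
period of each cycle.
-/

namespace LF

variable {V : Type*} {G : SimpleGraph V} {k : ℤ} {x y : ℤ → V}

theorem leakyForcingNumber_le_card [Fintype V] {ℓ : ℕ} {S : Finset V}
    (hS : IsLeakyForcingSet G ℓ S) : leakyForcingNumber G ℓ ≤ S.card :=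
  Nat.sInf_le ⟨S, rfl, hS⟩

/-- `x` and `y` unroll the inner and outer cycles of a generalized Petersen graph along `ℤ`:
`y` moves by `1`, `x` by `k`, and `x z`, `y z` are joined by a spoke. Both maps may be
periodic, which is how a finite graph is covered. -/
structure IsPetersenUnfolding (G : SimpleGraph V) (k : ℤ) (x y : ℤ → V) : Prop where
  adj_outer : ∀ z, G.Adj (y z) (y (z + 1))
  adj_inner : ∀ z, G.Adj (x z) (x (z + k))
  eq_of_adj_outer : ∀ z u, G.Adj (y z) u → u = y (z + 1) ∨ u = y (z - 1) ∨ u = x z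
  eq_of_adj_inner : ∀ z u, G.Adj (x z) u → u = x (z + k) ∨ u = x (z - k) ∨ u = y z

namespace IsPetersenUnfolding

theorem reflect (h : IsPetersenUnfolding G k x y) (c : ℤ) :
    IsPetersenUnfolding G k (fun z => x (c - z)) (fun z => y (c - z)) where
  adj_outer z := by
    convert (h.adj_outer (c - (z + 1))).symm using 2; ring
  adj_inner z := by
    convert (h.adj_inner (c - (z + k))).symm using 2; ring
  eq_of_adj_outer z u hu := by
    rw [show c - (z + 1) = c - z - 1 by ring, show c - (z - 1) = c - z + 1 by ring]
    rcases h.eq_of_adj_outer (c - z) u hu with hu | hu | hu <;> simp only [hu, true_or, or_true]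
  eq_of_adj_inner z u hu := by
    rw [show c - (z + k) = c - z - k by ring, show c - (z - k) = c - z + k by ring]
    rcases h.eq_of_adj_inner (c - z) u hu with hu | hu | hu <;> simp only [hu, true_or, or_true]

variable {L S : Set V}

theorem forced_outer_succ (h : IsPetersenUnfolding G k x y) {z : ℤ}
    (hz : Forced G L S (y z)) (hzL : y z ∉ L) (hpred : Forced G L S (y (z - 1)))
    (hspoke : Forced G L S (x z)) : Forced G L S (y (z + 1)) :=
  Forced.force _ _ hz hzL (h.adj_outer z) fun u hu hne => by
    rcases h.eq_of_adj_outer z u hu with rfl | rfl | rfl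
    exacts [absurd rfl hne, hpred, hspoke]

theorem forced_inner_add (h : IsPetersenUnfolding G k x y) {z : ℤ}
    (hz : Forced G L S (x z)) (hzL : x z ∉ L) (hsub : Forced G L S (x (z - k)))
    (hspoke : Forced G L S (y z)) : Forced G L S (x (z + k)) :=
  Forced.force _ _ hz hzL (h.adj_inner z) fun u hu hne => by
    rcases h.eq_of_adj_inner z u hu with rfl | rfl | rfl
    exacts [absurd rfl hne, hsub, hspoke]

theorem forced_of_no_leak (h : IsPetersenUnfolding G k x y) (hk : 1 ≤ k)
    (hy₀ : Forced G L S (y (k - 1))) (hy₁ : Forced G L S (y k))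
    (hx : ∀ z, 0 ≤ z → z < 2 * k → Forced G L S (x z)) {m : ℤ} (hm : k ≤ m)
    (hfree : ∀ z, k ≤ z → z < m → x z ∉ L ∧ y z ∉ L) :
    (∀ z, k - 1 ≤ z → z ≤ m → Forced G L S (y z)) ∧
      ∀ z, 0 ≤ z → z < m + k → Forced G L S (x z) := by
  induction m, hm using Int.leInduction with
  | base =>
    refine ⟨fun z hz₀ hz₁ => ?_, fun z hz₀ hz₁ => hx z hz₀ (by omega)⟩
    obtain rfl | rfl : z = k - 1 ∨ z = k := by omega
    exacts [hy₀, hy₁]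
  | succ m hm ih =>
    obtain ⟨hY, hX⟩ := ih fun z hz₀ hz₁ => hfree z hz₀ (by omega)
    obtain ⟨hxL, hyL⟩ := hfree m hm (by omega)
    have hYm : Forced G L S (y (m + 1)) :=
      h.forced_outer_succ (hY m (by omega) le_rfl) hyL (hY _ (by omega) (by omega))
        (hX m (by omega) (by omega))
    have hXm : Forced G L S (x (m + k)) :=
      h.forced_inner_add (hX m (by omega) (by omega)) hxL (hX _ (by omega) (by omega))
        (hY m (by omega) le_rfl)
    refine ⟨fun z hz₀ hz₁ => ?_, fun z hz₀ hz₁ => ?_⟩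
    · rcases (show z ≤ m ∨ z = m + 1 by omega) with hz | rfl
      exacts [hY z hz₀ hz, hYm]
    · rcases (show z < m + k ∨ z = m + k by omega) with hz | rfl
      exacts [hX z hz₀ hz, hXm]

end IsPetersenUnfolding

end LF

namespace LF

-- The cast `ℤ → Fin n` of this ring structure is reduction mod `n`.
open Fin.CommRing

theorem petersen_adj_inl_inr {n k : ℕ} {i j : Fin n} :
    (petersen n k).Adj (.inl i) (.inr j) ↔ i = j := by
  simp [petersen]

variable {n : ℕ} [NeZero n]

theorem intCast_ne_intCast_of_lt {z w : ℤ} (hzw : z < w) (hwz : w < z + n) :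
    (z : Fin n) ≠ (w : Fin n) := by
  rw [Ne, CharP.intCast_eq_intCast (Fin n) n, Int.modEq_iff_dvd]
  intro hdvd
  have := Int.le_of_dvd (by omega) hdvd
  omega

theorem exists_intCast_eq (a : Fin n) (c : ℤ) : ∃ z, c ≤ z ∧ z < c + n ∧ (z : Fin n) = a := by
  have hn : (0 : ℤ) < n := by exact_mod_cast NeZero.pos n
  have h₀ := Int.emod_nonneg ((a : ℤ) - c) hn.ne'
  have h₁ := Int.emod_lt_of_pos ((a : ℤ) - c) hn
  refine ⟨c + ((a : ℤ) - c) % n, by omega, by omega, ?_⟩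
  conv_rhs => rw [← Fin.cast_val_eq_self a, ← Int.cast_natCast]
  rw [CharP.intCast_eq_intCast (Fin n) n, Int.ModEq, Int.add_emod_emod, add_sub_cancel]

theorem val_add_mod_eq_iff {i j : Fin n} {c : ℕ} : (i.val + c) % n = j.val ↔ j = i + c := by
  rw [Fin.ext_iff (a := j), Fin.val_add, Fin.val_natCast, Nat.add_mod_mod, eq_comm]

theorem petersen_adj_inr_inr {k : ℕ} {i j : Fin n} :
    (petersen n k).Adj (.inr i) (.inr j) ↔ i ≠ j ∧ (j = i + 1 ∨ i = j + 1) := by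
  simp only [petersen, fromRel_adj, val_add_mod_eq_iff, Nat.cast_one, ne_eq, Sum.inr.injEq]

theorem petersen_adj_inl_inl {k : ℕ} {i j : Fin n} :
    (petersen n k).Adj (.inl i) (.inl j) ↔ i ≠ j ∧ (j = i + k ∨ i = j + k) := by
  simp only [petersen, fromRel_adj, val_add_mod_eq_iff, ne_eq, Sum.inl.injEq]

theorem isPetersenUnfolding_petersen {k : ℕ} (hk : 0 < k) (hkn : k < n) :
    IsPetersenUnfolding (petersen n k) k (fun z => .inl (z : Fin n)) (fun z => .inr (z : Fin n))
    where
  adj_outer z := petersen_adj_inr_inr.2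
    ⟨intCast_ne_intCast_of_lt (lt_add_one z) (by omega), Or.inl (by push_cast; rfl)⟩
  adj_inner z := petersen_adj_inl_inl.2
    ⟨intCast_ne_intCast_of_lt (by omega) (by omega), Or.inl (by push_cast; rfl)⟩
  eq_of_adj_outer z u hu := by
    cases u with
    | inl j => exact .inr <| .inr <| by rw [(adj_comm _ _ _).1 hu |> petersen_adj_inl_inr.1]
    | inr j =>
      obtain ⟨-, rfl | h⟩ := petersen_adj_inr_inr.1 hu
      · exact .inl (by push_cast; rfl)
      · exact .inr <| .inl <| by push_cast; rw [h, add_sub_cancel_right]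
  eq_of_adj_inner z u hu := by
    cases u with
    | inl j =>
      obtain ⟨-, rfl | h⟩ := petersen_adj_inl_inl.1 hu
      · exact .inl (by push_cast; rfl)
      · exact .inr <| .inl <| by push_cast; rw [h, add_sub_cancel_right]
    | inr j => exact .inr <| .inr <| by rw [petersen_adj_inl_inr.1 hu]

noncomputable def petersenForcingSet (n k : ℕ) [NeZero n] : Finset (Fin n ⊕ Fin n) :=
  (Finset.Ico (0 : ℤ) (2 * k)).image (fun z : ℤ => Sum.inl (z : Fin n)) ∪
    {Sum.inr ((k - 1 : ℤ) : Fin n), Sum.inr ((k : ℤ) : Fin n)}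

theorem card_petersenForcingSet_le (k : ℕ) : (petersenForcingSet n k).card ≤ 2 * k + 2 :=
  calc (petersenForcingSet n k).card
      ≤ ((Finset.Ico (0 : ℤ) (2 * k)).image (fun z : ℤ => (Sum.inl (z : Fin n) :
          Fin n ⊕ Fin n))).card + 2 :=
        (Finset.card_union_le _ _).trans (Nat.add_le_add_left Finset.card_le_two _)
    _ ≤ 2 * k + 2 := by grw [Finset.card_image_le, Int.card_Ico]; omega

theorem inl_mem_petersenForcingSet {k : ℕ} {z : ℤ} (h₀ : 0 ≤ z) (h₁ : z < 2 * k) :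
    Sum.inl (z : Fin n) ∈ petersenForcingSet n k :=
  Finset.mem_union_left _ (Finset.mem_image_of_mem _ (Finset.mem_Ico.2 ⟨h₀, h₁⟩))

theorem inr_mem_petersenForcingSet {k : ℕ} {z : ℤ} (h : z = k - 1 ∨ z = k) :
    Sum.inr (z : Fin n) ∈ petersenForcingSet n k := by
  rcases h with rfl | rfl <;> simp [petersenForcingSet]

theorem forced_petersen_of_leaks_at {k : ℕ} (hk : 0 < k) (hkn : k < n) {L : Set (Fin n ⊕ Fin n)}
    {m : ℤ} (hkm : k ≤ m) (hmn : m < k + n)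
    (hfree : ∀ z : ℤ, (z : Fin n) ≠ m → Sum.inl (z : Fin n) ∉ L ∧ Sum.inr (z : Fin n) ∉ L)
    (v : Fin n ⊕ Fin n) : Forced (petersen n k) L (petersenForcingSet n k) v := by
  have h := isPetersenUnfolding_petersen hk hkn
  have hS : ∀ v ∈ petersenForcingSet n k, Forced (petersen n k) L (petersenForcingSet n k) v :=
    Forced.init
  obtain ⟨upY, upX⟩ := h.forced_of_no_leak (by omega)
    (hS _ (inr_mem_petersenForcingSet (.inl rfl))) (hS _ (inr_mem_petersenForcingSet (.inr rfl)))
    (fun z h₀ h₁ => hS _ (inl_mem_petersenForcingSet h₀ h₁)) hkm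
    (fun z h₀ h₁ => hfree z (intCast_ne_intCast_of_lt (by omega) (by omega)))
  obtain ⟨downY, downX⟩ := (h.reflect (2 * k - 1)).forced_of_no_leak (m := 2 * k - 1 + n - m)
    (by omega) (hS _ (inr_mem_petersenForcingSet (by omega)))
    (hS _ (inr_mem_petersenForcingSet (by omega)))
    (fun z h₀ h₁ => hS _ (inl_mem_petersenForcingSet (by omega) (by omega))) (by omega)
    (fun z h₀ h₁ => hfree _ (intCast_ne_intCast_of_lt (by omega) (by omega)))
  cases v with
  | inl r =>
    obtain ⟨z, h₀, h₁, rfl⟩ := exists_intCast_eq r (m - n - k + 1)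
    rcases le_or_gt z (2 * k - 1) with hz | hz
    · simpa using downX (2 * k - 1 - z) (by omega) (by omega)
    · exact upX z (by omega) (by omega)
  | inr r =>
    obtain ⟨z, h₀, h₁, rfl⟩ := exists_intCast_eq r (m - n)
    rcases le_or_gt z k with hz | hz
    · simpa using downY (2 * k - 1 - z) (by omega) (by omega)
    · exact upY z (by omega) (by omega)

theorem isLeakyForcingSet_petersenForcingSet {k : ℕ} (hk : 0 < k) (hkn : k < n) :
    IsLeakyForcingSet (petersen n k) 1 (petersenForcingSet n k) := by
  intro L hL
  replace hL : L.Subsingleton := Set.ncard_le_one_iff_subsingleton.1 hL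
  obtain ⟨a, ha⟩ : ∃ a : Fin n, ∀ v ∈ L, Sum.elim id id v = a := by
    rcases L.eq_empty_or_nonempty with rfl | ⟨p, hp⟩
    · exact ⟨0, by simp⟩
    · exact ⟨Sum.elim id id p, fun v hv => by rw [hL hv hp]⟩
  obtain ⟨m, hkm, hmn, rfl⟩ := exists_intCast_eq a k
  exact forced_petersen_of_leaks_at hk hkn hkm hmn fun z hz =>
    ⟨fun h => hz (ha _ h), fun h => hz (ha _ h)⟩

end LF

theorem stmt11_general (n k : ℕ) (hk : 1 ≤ k) (hn2k : 2 * k ≤ n) :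
    LF.leakyForcingNumber (LF.petersen n k) 1 ≤ 2 * k + 2 := by
  have : NeZero n := ⟨by omega⟩
  calc LF.leakyForcingNumber (LF.petersen n k) 1
      ≤ (LF.petersenForcingSet n k).card :=
        LF.leakyForcingNumber_le_card (LF.isLeakyForcingSet_petersenForcingSet hk (by omega))
    _ ≤ 2 * k + 2 := LF.card_petersenForcingSet_le k

theorem stmt11 (n k : ℕ) (hn : 3 ≤ n) (hk : 1 ≤ k) (hn2k : 2 * k ≤ n)
    (hkn : 2 * k + 1 ≤ n) :
    LF.leakyForcingNumber (LF.petersen n k) 1 ≤ 2 * k + 2 :=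
  stmt11_general n k hk hn2k
end

section
/- Let G be a connected graph on n ≥ 3 vertices. Then the 1-leaky forcing number of G equals n − 1 if and only if G is one of: the complete graph K_n, the star S_n, the complete graph K_{n−1} with one pendant leaf attached, or K_n minus one edge. -/
open SimpleGraph

/-- The complete graph on the first `n-1` vertices of `Fin n`, with vertex `n-1`
attached as a pendant leaf to vertex `0`. -/
def LF.completePlusLeaf (n : ℕ) : SimpleGraph (Fin n) :=
  SimpleGraph.fromRel (fun i j =>
    (i.val + 1 < n ∧ j.val + 1 < n) ∨ (i.val + 1 = n ∧ j.val = 0))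

/-- The complete graph on `Fin n` with the edge between vertices `0` and `1` deleted. -/
def LF.completeMinusEdge (n : ℕ) : SimpleGraph (Fin n) :=
  SimpleGraph.fromRel (fun i j =>
    ¬(i.val = 0 ∧ j.val = 1) ∧ ¬(i.val = 1 ∧ j.val = 0))

/-!
Start from the complement of a pair `{x, y}` with one leak. A vertex `b` can force `x` only if
it is adjacent to `x` and is neither `y` nor a neighbour of `y` (a private neighbour of `x`
relative to `y`); once `x` is blue, any non-leaking neighbour of `y` forces `y`. Hence
`{x, y}ᶜ` is a 1-leaky forcing set exactly when both `x` and `y` have degree at least two and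
they have at least two private neighbours in total, and the complement of any vertex of degree
at least two is one. So `Z_{(1)}(G) = n - 1` means that any two vertices of degree at least two
are near twins: their neighbourhoods differ, outside `{x, y}`, in at most one vertex.

For connected `G` with `n ≥ 3` this forces one of the four shapes. Without leaves, every vertex
has at most one non-neighbour and two disjoint non-edges are impossible, so `G` is `K_n` or
`K_n - e`. With a leaf `p` at `q`, every leaf hangs at `q`; either all other vertices are
leaves (a star), or `p` is the only leaf, `q` is adjacent to everything and the vertices other
than `p` form a clique.
-/

namespace SimpleGraph

variable {V : Type*} {G : SimpleGraph V}

theorem nonempty_iso_iff_exists_eq_comap {W : Type*} {H : SimpleGraph W} :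
    Nonempty (G ≃g H) ↔ ∃ e : V ≃ W, G = H.comap e := by
  constructor
  · rintro ⟨e⟩
    exact ⟨e.toEquiv, (Embedding.comap_eq e.toEmbedding).symm⟩
  · rintro ⟨e, rfl⟩
    exact ⟨Iso.comap e H⟩

theorem Connected.card_le_two_of_adj [Fintype V] (hc : G.Connected) {u v : V} (huv : G.Adj u v)
    (hu : (G.neighborSet u).Subsingleton) (hv : (G.neighborSet v).Subsingleton) :
    Fintype.card V ≤ 2 := by
  classical
  have hclosed : ∀ a b, G.Adj a b → a ∈ ({u, v} : Finset V) → b ∈ ({u, v} : Finset V) := by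
    intro a b hab ha
    simp only [Finset.mem_insert, Finset.mem_singleton] at ha ⊢
    rcases ha with rfl | rfl
    · exact .inr (hu hab huv)
    · exact .inl (hv hab huv.symm)
  have hall : ∀ w, w ∈ ({u, v} : Finset V) := by
    intro w
    suffices ∀ a, a ∈ ({u, v} : Finset V) → G.Walk a w → w ∈ ({u, v} : Finset V) from
      this u (by simp) (hc u w).some
    intro a ha p
    induction p with
    | nil => exact ha
    | cons hab _ ih => exact ih (hclosed _ _ hab ha)
  calc Fintype.card V = (Finset.univ : Finset V).card := rfl
    _ ≤ ({u, v} : Finset V).card := Finset.card_le_card fun w _ => hall w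
    _ ≤ 2 := Finset.card_le_two

variable [Fintype V]

theorem Connected.exists_adj (hc : G.Connected) (hn : 1 < Fintype.card V) (v : V) :
    ∃ w, G.Adj v w :=
  have : Nontrivial V := Fintype.one_lt_card_iff_nontrivial.mp hn
  hc.preconnected.exists_adj_of_nontrivial v

theorem Connected.nontrivial_neighborSet_of_adj (hc : G.Connected) (hn : 3 ≤ Fintype.card V)
    {u v : V} (huv : G.Adj u v) (hu : (G.neighborSet u).Subsingleton) :
    (G.neighborSet v).Nontrivial :=
  Set.not_subsingleton_iff.mp fun hv => by
    have := hc.card_le_two_of_adj huv hu hv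
    omega

theorem Connected.exists_nontrivial_neighborSet (hc : G.Connected) (hn : 3 ≤ Fintype.card V) :
    ∃ v, (G.neighborSet v).Nontrivial := by
  obtain ⟨u⟩ : Nonempty V := Fintype.card_pos_iff.mp (by omega)
  obtain ⟨v, huv⟩ := hc.exists_adj (by omega) u
  by_cases hu : (G.neighborSet u).Subsingleton
  · exact ⟨v, hc.nontrivial_neighborSet_of_adj hn huv hu⟩
  · exact ⟨u, Set.not_subsingleton_iff.mp hu⟩

end SimpleGraph

theorem Equiv.exists_apply_eq_apply_eq {α β : Type*} [DecidableEq β]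
    (e₀ : α ≃ β) {x y : α} {i j : β} (hxy : x ≠ y) (hij : i ≠ j) :
    ∃ e : α ≃ β, e x = i ∧ e y = j := by
  let e₁ := e₀.trans (Equiv.swap (e₀ x) i)
  have h₁ : e₁ x = i := by simp [e₁]
  have hy : e₁ y ≠ i := h₁ ▸ e₁.injective.ne hxy.symm
  refine ⟨e₁.trans (Equiv.swap (e₁ y) j), ?_, by simp⟩
  simp only [Equiv.trans_apply, h₁]
  exact Equiv.swap_apply_of_ne_of_ne hy.symm hij

theorem Set.Nontrivial.exists_notMem_of_ncard_le_one {α : Type*} [Finite α] {s L : Set α}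
    (hs : s.Nontrivial) (hL : L.ncard ≤ 1) : ∃ b ∈ s, b ∉ L := by
  obtain ⟨a, ha, b, hb, hab⟩ := hs
  by_contra! h
  exact hab (Set.ncard_le_one_iff_subsingleton.mp hL (h a ha) (h b hb))

namespace LF

variable {V : Type*} {G : SimpleGraph V}

theorem Forced.mono {L S T : Set V} (hST : S ⊆ T) {v : V} (h : Forced G L S v) :
    Forced G L T v := by
  induction h with
  | init v hv => exact .init v (hST hv)
  | force b w _ hbL hadj _ ihb ihall => exact .force b w ihb hbL hadj ihall

theorem IsLeakyForcingSet.mono {ℓ : ℕ} {S T : Set V} (hST : S ⊆ T)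
    (h : IsLeakyForcingSet G ℓ S) : IsLeakyForcingSet G ℓ T :=
  fun L hL v => (h L hL v).mono hST

theorem isLeakyForcingSet_univ (ℓ : ℕ) : IsLeakyForcingSet G ℓ Set.univ :=
  fun _ _ v => .init v (Set.mem_univ v)

def privateNeighborSet (G : SimpleGraph V) (x y : V) : Set V :=
  {b | G.Adj x b ∧ b ≠ y ∧ ¬G.Adj y b}

def NearTwins (G : SimpleGraph V) (x y : V) : Prop :=
  (privateNeighborSet G x y ∪ privateNeighborSet G y x).Subsingleton

def HubsAreNearTwins (G : SimpleGraph V) : Prop :=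
  ∀ x y, (G.neighborSet x).Nontrivial → (G.neighborSet y).Nontrivial → NearTwins G x y

theorem NearTwins.eq_of_mem_left {x y s t : V} (h : NearTwins G x y)
    (hs : s ∈ privateNeighborSet G x y) (ht : t ∈ privateNeighborSet G x y) : s = t :=
  h (.inl hs) (.inl ht)

theorem NearTwins.eq_of_mem_left_right {x y s t : V} (h : NearTwins G x y)
    (hs : s ∈ privateNeighborSet G x y) (ht : t ∈ privateNeighborSet G y x) : s = t :=
  h (.inl hs) (.inr ht)

theorem nearTwins_self (x : V) : NearTwins G x x := by
  rintro s (⟨hs, -, hs'⟩ | ⟨hs, -, hs'⟩) <;> exact absurd hs hs'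

theorem not_forced_of_neighborSet_subset {L S : Set V} {x : V} (hx : x ∉ S)
    (hL : G.neighborSet x ⊆ L) : ¬Forced G L S x := by
  suffices ∀ v, Forced G L S v → v ≠ x from fun h => this x h rfl
  intro v hv
  induction hv with
  | init v hv => exact ne_of_mem_of_not_mem hv hx
  | force b w _ hbL hadj _ _ =>
    rintro rfl
    exact hbL (hL hadj.symm)

theorem not_forced_of_privateNeighborSet_subset {L S : Set V} {x y : V} (hxy : x ≠ y)
    (hx : x ∉ S) (hy : y ∉ S) (hxL : privateNeighborSet G x y ⊆ L)
    (hyL : privateNeighborSet G y x ⊆ L) : ¬Forced G L S x := by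
  suffices ∀ v, Forced G L S v → v ≠ x ∧ v ≠ y from fun h => (this x h).1 rfl
  intro v hv
  induction hv with
  | init v hv => exact ⟨ne_of_mem_of_not_mem hv hx, ne_of_mem_of_not_mem hv hy⟩
  | force b w _ hbL hadj _ ihb ihall =>
    refine ⟨?_, ?_⟩ <;> rintro rfl
    · exact hbL (hxL ⟨hadj.symm, ihb.2, fun hyb => (ihall y hyb.symm hxy.symm).2 rfl⟩)
    · exact hbL (hyL ⟨hadj.symm, ihb.1, fun hxb => (ihall x hxb.symm hxy).1 rfl⟩)

theorem forced_compl_pair {L : Set V} {x y b c : V} (hb : b ∈ privateNeighborSet G x y)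
    (hbL : b ∉ L) (hc : G.Adj y c) (hcL : c ∉ L) (v : V) : Forced G L {x, y}ᶜ v := by
  obtain ⟨hxb, hby, hyb⟩ := hb
  have hinit : ∀ u, u ≠ x → u ≠ y → Forced G L {x, y}ᶜ u := fun u hux huy =>
    .init u (by simp [hux, huy])
  have hfx : Forced G L {x, y}ᶜ x :=
    .force b x (hinit b hxb.ne' hby) hbL hxb.symm fun u hbu hux =>
      hinit u hux (by rintro rfl; exact hyb hbu.symm)
  have hfy : Forced G L {x, y}ᶜ y := by
    have hforced : ∀ u, u ≠ y → Forced G L {x, y}ᶜ u := fun u huy => by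
      by_cases hux : u = x
      · exact hux ▸ hfx
      · exact hinit u hux huy
    exact .force c y (hforced c hc.ne') hcL hc.symm fun u _ huy => hforced u huy
  by_cases hvx : v = x
  · exact hvx ▸ hfx
  by_cases hvy : v = y
  · exact hvy ▸ hfy
  exact hinit v hvx hvy

theorem isLeakyForcingSet_compl_singleton [Finite V] {v : V}
    (hv : (G.neighborSet v).Nontrivial) : IsLeakyForcingSet G 1 {v}ᶜ := by
  intro L hL w
  have hinit : ∀ u, u ≠ v → Forced G L {v}ᶜ u := fun u hu => .init u hu
  by_cases hwv : w = v
  · subst hwv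
    obtain ⟨c, hc, hcL⟩ := hv.exists_notMem_of_ncard_le_one hL
    exact .force c w (hinit c (G.ne_of_adj hc).symm) hcL (G.adj_symm hc)
      fun u _ huw => hinit u huw
  · exact hinit w hwv

theorem isLeakyForcingSet_compl_pair_iff [Finite V] {x y : V} (hxy : x ≠ y) :
    IsLeakyForcingSet G 1 {x, y}ᶜ ↔
      (G.neighborSet x).Nontrivial ∧ (G.neighborSet y).Nontrivial ∧ ¬NearTwins G x y := by
  have hx : x ∉ ({x, y}ᶜ : Set V) := by simp
  have hy : y ∉ ({x, y}ᶜ : Set V) := by simp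
  constructor
  · intro h
    simp only [← Set.not_subsingleton_iff]
    refine ⟨fun hs => ?_, fun hs => ?_, fun hT => ?_⟩
    · exact not_forced_of_neighborSet_subset hx subset_rfl
        (h _ (Set.ncard_le_one_iff_subsingleton.mpr hs) x)
    · exact not_forced_of_neighborSet_subset hy subset_rfl
        (h _ (Set.ncard_le_one_iff_subsingleton.mpr hs) y)
    · exact not_forced_of_privateNeighborSet_subset hxy hx hy Set.subset_union_left
        Set.subset_union_right (h _ (Set.ncard_le_one_iff_subsingleton.mpr hT) x)
  · rintro ⟨hNx, hNy, hT⟩ L hL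
    obtain ⟨b, hb | hb, hbL⟩ :=
      (Set.not_subsingleton_iff.mp hT).exists_notMem_of_ncard_le_one hL
    · obtain ⟨c, hc, hcL⟩ := hNy.exists_notMem_of_ncard_le_one hL
      exact forced_compl_pair hb hbL hc hcL
    · obtain ⟨c, hc, hcL⟩ := hNx.exists_notMem_of_ncard_le_one hL
      rw [Set.pair_comm]
      exact forced_compl_pair hb hbL hc hcL

section Fintype

variable [Fintype V]

theorem leakyForcingNumber_le_iff {ℓ k : ℕ} :
    leakyForcingNumber G ℓ ≤ k ↔ ∃ S : Finset V, S.card ≤ k ∧ IsLeakyForcingSet G ℓ ↑S := by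
  constructor
  · intro h
    have hne : {k | ∃ S : Finset V, S.card = k ∧ IsLeakyForcingSet G ℓ ↑S}.Nonempty :=
      ⟨_, Finset.univ, rfl, by simpa using isLeakyForcingSet_univ ℓ⟩
    obtain ⟨S, hS, hS'⟩ := Nat.sInf_mem hne
    exact ⟨S, hS ▸ h, hS'⟩
  · rintro ⟨S, hS, hS'⟩
    exact (Nat.sInf_le ⟨S, rfl, hS'⟩ : leakyForcingNumber G ℓ ≤ S.card).trans hS

theorem leakyForcingNumber_le_card_sub_one {v : V} (hv : (G.neighborSet v).Nontrivial) :
    leakyForcingNumber G 1 ≤ Fintype.card V - 1 := by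
  classical
  refine leakyForcingNumber_le_iff.mpr ⟨{v}ᶜ, by simp [Finset.card_compl], ?_⟩
  simpa using isLeakyForcingSet_compl_singleton hv

theorem leakyForcingNumber_le_card_sub_two_iff {ℓ : ℕ} (hn : 2 ≤ Fintype.card V) :
    leakyForcingNumber G ℓ ≤ Fintype.card V - 2 ↔
      ∃ x y, x ≠ y ∧ IsLeakyForcingSet G ℓ {x, y}ᶜ := by
  classical
  rw [leakyForcingNumber_le_iff]
  constructor
  · rintro ⟨S, hS, hS'⟩
    obtain ⟨x, hx, y, hy, hxy⟩ := Finset.one_lt_card.mp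
      (by rw [Finset.card_compl]; omega : 1 < Sᶜ.card)
    refine ⟨x, y, hxy, hS'.mono fun u hu => ?_⟩
    simp only [Finset.mem_compl] at hx hy
    simp only [Set.mem_compl_iff, Set.mem_insert_iff, Set.mem_singleton_iff, not_or]
    exact ⟨fun h => hx (h ▸ hu), fun h => hy (h ▸ hu)⟩
  · rintro ⟨x, y, hxy, h⟩
    exact ⟨{x, y}ᶜ, by rw [Finset.card_compl, Finset.card_pair hxy],
      by rwa [Finset.coe_compl, Finset.coe_pair]⟩

theorem leakyForcingNumber_eq_card_sub_one_iff {v : V} (hv : (G.neighborSet v).Nontrivial) :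
    leakyForcingNumber G 1 = Fintype.card V - 1 ↔ HubsAreNearTwins G := by
  have hcard : 1 < Fintype.card V := by
    obtain ⟨a, -, b, -, hab⟩ := hv
    exact Fintype.one_lt_card_iff.mpr ⟨a, b, hab⟩
  have hle := leakyForcingNumber_le_card_sub_one hv
  have hiff : leakyForcingNumber G 1 = Fintype.card V - 1 ↔
      ¬leakyForcingNumber G 1 ≤ Fintype.card V - 2 := by omega
  rw [hiff, leakyForcingNumber_le_card_sub_two_iff hcard]
  constructor
  · intro h x y hx hy
    by_cases hxy : x = y
    · exact hxy ▸ nearTwins_self x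
    · by_contra hT
      exact h ⟨x, y, hxy, (isLeakyForcingSet_compl_pair_iff hxy).mpr ⟨hx, hy, hT⟩⟩
  · rintro h ⟨x, y, hxy, hS⟩
    obtain ⟨hx, hy, hT⟩ := (isLeakyForcingSet_compl_pair_iff hxy).mp hS
    exact hT (h x y hx hy)

end Fintype

def starAt (c : V) : SimpleGraph V :=
  SimpleGraph.fromRel fun u _ => u = c

def completeWithLeafAt (p q : V) : SimpleGraph V :=
  SimpleGraph.fromRel fun u v => (u ≠ p ∧ v ≠ p) ∨ (u = p ∧ v = q)

def completeMinusEdgeAt (a b : V) : SimpleGraph V :=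
  SimpleGraph.fromRel fun u v => ¬(u = a ∧ v = b) ∧ ¬(u = b ∧ v = a)

theorem ne_of_subsingleton_of_nontrivial {a b : V} (ha : (G.neighborSet a).Subsingleton)
    (hb : (G.neighborSet b).Nontrivial) : a ≠ b :=
  fun h => hb.not_subsingleton (h ▸ ha)

theorem eq_of_not_adj_of_not_adj (hT : ∀ x y, NearTwins G x y)
    (hhub : ∀ x, (G.neighborSet x).Nontrivial) {x y z : V} (hxy : x ≠ y) (hxz : x ≠ z)
    (hy : ¬G.Adj x y) (hz : ¬G.Adj x z) : y = z := by
  by_contra hyz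
  obtain ⟨w, hwy, hwz⟩ : ∃ w, G.Adj w y ∧ G.Adj w z := by
    by_cases hyz' : G.Adj y z
    · obtain ⟨a, hxa⟩ := (hhub x).nonempty
      have hay : a ≠ y := fun h => hy (h ▸ hxa)
      have haz : a ≠ z := fun h => hz (h ▸ hxa)
      refine ⟨a, by_contra fun h => ?_, by_contra fun h => ?_⟩
      · exact haz ((hT x y).eq_of_mem_left_right ⟨hxa, hay, fun h' => h h'.symm⟩
          ⟨hyz', hxz.symm, hz⟩)
      · exact hay ((hT x z).eq_of_mem_left_right ⟨hxa, haz, fun h' => h h'.symm⟩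
          ⟨hyz'.symm, hxy.symm, hy⟩)
    · obtain ⟨a, hya, b, hyb, hab⟩ := hhub y
      by_contra! h
      exact hab ((hT y z).eq_of_mem_left
        ⟨hya, fun h' => hyz' (h' ▸ hya), fun h' => h a hya.symm h'.symm⟩
        ⟨hyb, fun h' => hyz' (h' ▸ hyb), fun h' => h b hyb.symm h'.symm⟩)
  exact hyz ((hT w x).eq_of_mem_left ⟨hwy, hxy.symm, hy⟩ ⟨hwz, hxz.symm, hz⟩)

theorem eq_top_or_eq_completeMinusEdgeAt (hT : ∀ x y, NearTwins G x y)
    (hhub : ∀ x, (G.neighborSet x).Nontrivial) :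
    G = ⊤ ∨ ∃ a b, a ≠ b ∧ G = completeMinusEdgeAt a b := by
  have hnon : ∀ {x y z : V}, x ≠ y → x ≠ z → ¬G.Adj x y → ¬G.Adj x z → y = z :=
    eq_of_not_adj_of_not_adj hT hhub
  by_cases hcomp : ∀ a b, a ≠ b → G.Adj a b
  · left
    ext u v
    exact ⟨G.ne_of_adj, hcomp u v⟩
  push Not at hcomp
  obtain ⟨a, b, hab, hnab⟩ := hcomp
  have hnonadj : ∀ u v, u ≠ v → ¬G.Adj u v → (u = a ∧ v = b) ∨ (u = b ∧ v = a) := by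
    intro u v huv h
    by_cases hua : u = a
    · subst hua
      exact .inl ⟨rfl, hnon huv hab h hnab⟩
    by_cases hub : u = b
    · subst hub
      exact .inr ⟨rfl, hnon huv hab.symm h fun h' => hnab h'.symm⟩
    have hva : v ≠ a := by
      rintro rfl
      exact hub (hnon (Ne.symm huv) hab (fun h' => h h'.symm) hnab)
    have hvb : v ≠ b := by
      rintro rfl
      exact hua (hnon (Ne.symm huv) hab.symm (fun h' => h h'.symm) fun h' => hnab h'.symm)
    have hav : G.Adj a v := by_contra fun h' => hvb (hnon (Ne.symm hva) hab h' hnab)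
    have hub' : G.Adj u b := by_contra fun h' => hvb (hnon huv hub h h')
    exact absurd ((hT a u).eq_of_mem_left_right ⟨hav, Ne.symm huv, h⟩ ⟨hub', hab.symm, hnab⟩) hvb
  refine .inr ⟨a, b, hab, ?_⟩
  ext u v
  simp only [completeMinusEdgeAt, SimpleGraph.fromRel_adj]
  constructor
  · intro h
    refine ⟨G.ne_of_adj h, .inl ⟨?_, ?_⟩⟩ <;> rintro ⟨rfl, rfl⟩
    exacts [hnab h, hnab h.symm]
  · rintro ⟨huv, h⟩
    by_contra hadj
    have := hnonadj u v huv hadj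
    tauto

section Pendant

variable [Fintype V] {p q : V}

theorem adj_of_subsingleton_neighborSet (hc : G.Connected) (hn : 3 ≤ Fintype.card V)
    (hT : HubsAreNearTwins G) (hp : (G.neighborSet p).Subsingleton) (hpq : G.Adj p q) {v : V}
    (hv : (G.neighborSet v).Subsingleton) : G.Adj v q := by
  have hq := hc.nontrivial_neighborSet_of_adj hn hpq hp
  obtain ⟨w, hvw⟩ := hc.exists_adj (by omega) v
  have hw := hc.nontrivial_neighborSet_of_adj hn hvw hv
  by_contra hvq
  have hwq : w ≠ q := by rintro rfl; exact hvq hvw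
  have hpv : p = v := (hT q w hq hw).eq_of_mem_left_right
    ⟨hpq.symm, ne_of_subsingleton_of_nontrivial hp hw, fun h => hwq (hp h.symm hpq)⟩
    ⟨hvw.symm, ne_of_subsingleton_of_nontrivial hv hq, fun h => hvq h.symm⟩
  exact hvq (hpv ▸ hpq)

theorem eq_starAt (hc : G.Connected) (hn : 3 ≤ Fintype.card V) (hT : HubsAreNearTwins G)
    (hp : (G.neighborSet p).Subsingleton) (hpq : G.Adj p q)
    (hleaf : ∀ z, z ≠ q → (G.neighborSet z).Subsingleton) : G = starAt q := by
  have hadj : ∀ z, z ≠ q → G.Adj z q := fun z hz =>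
    adj_of_subsingleton_neighborSet hc hn hT hp hpq (hleaf z hz)
  ext u v
  simp only [starAt, SimpleGraph.fromRel_adj]
  constructor
  · intro h
    refine ⟨G.ne_of_adj h, or_iff_not_imp_left.mpr fun hu => ?_⟩
    exact hleaf u hu h (hadj u hu)
  · rintro ⟨huv, rfl | rfl⟩
    exacts [(hadj v huv.symm).symm, hadj u huv]

/-- Once some vertex `z ≠ q` is a hub, `p` is the only leaf, and comparing each hub `y` with `q`,
whose private neighbour is `p`, shows that `y` is adjacent to `q` and to every other hub. -/
theorem eq_completeWithLeafAt (hc : G.Connected) (hn : 3 ≤ Fintype.card V)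
    (hT : HubsAreNearTwins G) (hp : (G.neighborSet p).Subsingleton) (hpq : G.Adj p q) {z : V}
    (hzq : z ≠ q) (hz : (G.neighborSet z).Nontrivial) : G = completeWithLeafAt p q := by
  have hq := hc.nontrivial_neighborSet_of_adj hn hpq hp
  have hnp : ∀ y, y ≠ q → ¬G.Adj y p := fun y hyq h => hyq (hp h.symm hpq)
  have hhub : ∀ y, y ≠ p → (G.neighborSet y).Nontrivial := by
    intro y hyp
    by_contra hy
    rw [Set.not_nontrivial_iff] at hy
    have hyq := adj_of_subsingleton_neighborSet hc hn hT hp hpq hy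
    exact hyp ((hT q z hq hz).eq_of_mem_left
      ⟨hpq.symm, ne_of_subsingleton_of_nontrivial hp hz, hnp z hzq⟩
      ⟨hyq.symm, ne_of_subsingleton_of_nontrivial hy hz, fun h => hzq (hy h.symm hyq)⟩).symm
  have hpriv : ∀ y s, y ≠ p → y ≠ q →
      s ∈ privateNeighborSet G q y ∪ privateNeighborSet G y q → s = p :=
    fun y s hyp hyq hs => hT q y hq (hhub y hyp) hs (.inl ⟨hpq.symm, hyp.symm, hnp y hyq⟩)
  have hqy : ∀ y, y ≠ p → y ≠ q → G.Adj q y := by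
    intro y hyp hyq
    by_contra hqy
    obtain ⟨w, hyw⟩ := (hhub y hyp).nonempty
    have hwp : w ≠ p := by rintro rfl; exact hnp y hyq hyw
    by_cases hwq : w = q
    · exact hqy (hwq ▸ hyw.symm)
    have hqw : G.Adj q w := by_contra fun h => hwp (hpriv y w hyp hyq (.inr ⟨hyw, hwq, h⟩))
    exact hyp (hpriv w y hwp hwq (.inr ⟨hyw.symm, hyq, hqy⟩))
  have hclique : ∀ u v, u ≠ p → v ≠ p → u ≠ v → G.Adj u v := by
    intro u v hup hvp huv
    rcases eq_or_ne u q with rfl | huq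
    · exact hqy v hvp huv.symm
    rcases eq_or_ne v q with rfl | hvq
    · exact (hqy u hup huv).symm
    by_contra h
    exact hvp (hpriv u v hup huq (.inl ⟨hqy v hvp hvq, huv.symm, h⟩))
  ext u v
  simp only [completeWithLeafAt, SimpleGraph.fromRel_adj]
  constructor
  · intro h
    refine ⟨G.ne_of_adj h, ?_⟩
    by_cases hu : u = p
    · exact .inl (.inr ⟨hu, hp (hu ▸ h) hpq⟩)
    by_cases hv : v = p
    · exact .inr (.inr ⟨hv, hp (hv ▸ h.symm) hpq⟩)
    exact .inl (.inl ⟨hu, hv⟩)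
  · rintro ⟨huv, (⟨hu, hv⟩ | ⟨hu, hv⟩) | (⟨hv, hu⟩ | ⟨hv, hu⟩)⟩
    · exact hclique u v hu hv huv
    · exact hu ▸ hv ▸ hpq
    · exact hclique u v hu hv huv
    · exact hu ▸ hv ▸ hpq.symm

end Pendant

theorem eq_of_hubsAreNearTwins [Fintype V] (hc : G.Connected) (hn : 3 ≤ Fintype.card V)
    (hT : HubsAreNearTwins G) :
    G = ⊤ ∨ (∃ c, G = starAt c) ∨ (∃ p q, p ≠ q ∧ G = completeWithLeafAt p q) ∨
      ∃ a b, a ≠ b ∧ G = completeMinusEdgeAt a b := by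
  by_cases hleaf : ∃ p, (G.neighborSet p).Subsingleton
  · obtain ⟨p, hp⟩ := hleaf
    obtain ⟨q, hpq⟩ := hc.exists_adj (by omega) p
    by_cases hstar : ∀ z, z ≠ q → (G.neighborSet z).Subsingleton
    · exact .inr (.inl ⟨q, eq_starAt hc hn hT hp hpq hstar⟩)
    push Not at hstar
    obtain ⟨z, hzq, hz⟩ := hstar
    exact .inr (.inr (.inl ⟨p, q, G.ne_of_adj hpq,
      eq_completeWithLeafAt hc hn hT hp hpq hzq hz⟩))
  · push Not at hleaf
    rcases eq_top_or_eq_completeMinusEdgeAt (fun x y => hT x y (hleaf x) (hleaf y)) hleaf with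
      h | h
    exacts [.inl h, .inr (.inr (.inr h))]

theorem hubsAreNearTwins_top : HubsAreNearTwins (⊤ : SimpleGraph V) := by
  rintro x y - - s (⟨-, hsy, hys⟩ | ⟨-, hsx, hxs⟩)
  exacts [absurd hsy.symm hys, absurd hsx.symm hxs]

theorem hubsAreNearTwins_starAt (c : V) : HubsAreNearTwins (starAt c) := by
  have hhub : ∀ x, ((starAt c).neighborSet x).Nontrivial → x = c := by
    intro x hx
    by_contra hxc
    refine hx.not_subsingleton fun s hs t ht => ?_
    simp only [SimpleGraph.mem_neighborSet, starAt, SimpleGraph.fromRel_adj] at hs ht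
    grind
  intro x y hx hy
  rw [hhub x hx, hhub y hy]
  exact nearTwins_self c

theorem hubsAreNearTwins_completeWithLeafAt (p q : V) :
    HubsAreNearTwins (completeWithLeafAt p q) := by
  have hhub : ∀ x, ((completeWithLeafAt p q).neighborSet x).Nontrivial → x ≠ p := by
    rintro x hx rfl
    refine hx.not_subsingleton fun s hs t ht => ?_
    simp only [SimpleGraph.mem_neighborSet, completeWithLeafAt, SimpleGraph.fromRel_adj] at hs ht
    grind
  intro x y hx hy
  refine (Set.subsingleton_singleton (a := p)).anti ?_
  rintro s (⟨-, hs, hs'⟩ | ⟨-, hs, hs'⟩) <;>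
    simp only [completeWithLeafAt, SimpleGraph.fromRel_adj] at hs' <;>
    grind [hhub x hx, hhub y hy]

theorem hubsAreNearTwins_completeMinusEdgeAt (a b : V) :
    HubsAreNearTwins (completeMinusEdgeAt a b) := by
  rintro x y - - s hs t ht
  simp only [privateNeighborSet, completeMinusEdgeAt, SimpleGraph.fromRel_adj, Set.mem_union,
    Set.mem_ofPred_eq] at hs ht
  grind

section Iso

variable {W : Type*}

theorem starAt_comap (e : V ≃ W) (c : W) : (starAt c).comap e = starAt (e.symm c) := by
  ext u v
  simp [starAt, ← e.eq_symm_apply]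

theorem completeWithLeafAt_comap (e : V ≃ W) (p q : W) :
    (completeWithLeafAt p q).comap e = completeWithLeafAt (e.symm p) (e.symm q) := by
  ext u v
  simp [completeWithLeafAt, ← e.eq_symm_apply]

theorem completeMinusEdgeAt_comap (e : V ≃ W) (a b : W) :
    (completeMinusEdgeAt a b).comap e = completeMinusEdgeAt (e.symm a) (e.symm b) := by
  ext u v
  simp [completeMinusEdgeAt, ← e.eq_symm_apply]

theorem starGraph_eq_starAt {n : ℕ} (hn : 0 < n) : starGraph n = starAt ⟨0, hn⟩ := by
  simp [starGraph, starAt, Fin.ext_iff]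

theorem completePlusLeaf_eq_completeWithLeafAt {n : ℕ} (hn : 0 < n) :
    completePlusLeaf n = completeWithLeafAt ⟨n - 1, by omega⟩ ⟨0, hn⟩ := by
  simp only [completePlusLeaf, completeWithLeafAt, Fin.ext_iff, ne_eq]
  congr
  funext i j
  grind

theorem completeMinusEdge_eq_completeMinusEdgeAt {n : ℕ} (hn : 1 < n) :
    completeMinusEdge n = completeMinusEdgeAt ⟨0, by omega⟩ ⟨1, hn⟩ := by
  simp [completeMinusEdge, completeMinusEdgeAt, Fin.ext_iff]

variable [Fintype V]

theorem nonempty_iso_top_iff :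
    Nonempty (G ≃g (⊤ : SimpleGraph (Fin (Fintype.card V)))) ↔ G = ⊤ := by
  rw [SimpleGraph.nonempty_iso_iff_exists_eq_comap]
  constructor
  · rintro ⟨e, rfl⟩
    exact SimpleGraph.comap_top e.injective
  · rintro rfl
    exact ⟨Fintype.equivFin V, (SimpleGraph.comap_top (Fintype.equivFin V).injective).symm⟩

theorem nonempty_iso_starGraph_iff (hn : 0 < Fintype.card V) :
    Nonempty (G ≃g starGraph (Fintype.card V)) ↔ ∃ c, G = starAt c := by
  classical
  rw [starGraph_eq_starAt hn, SimpleGraph.nonempty_iso_iff_exists_eq_comap]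
  simp only [starAt_comap]
  constructor
  · rintro ⟨e, rfl⟩
    exact ⟨_, rfl⟩
  · rintro ⟨c, rfl⟩
    let e := (Fintype.equivFin V).trans (Equiv.swap (Fintype.equivFin V c) ⟨0, hn⟩)
    exact ⟨e, congrArg starAt (e.eq_symm_apply.mpr (by simp [e]))⟩

theorem nonempty_iso_completePlusLeaf_iff (hn : 2 ≤ Fintype.card V) :
    Nonempty (G ≃g completePlusLeaf (Fintype.card V)) ↔
      ∃ p q, p ≠ q ∧ G = completeWithLeafAt p q := by
  classical
  rw [completePlusLeaf_eq_completeWithLeafAt (by omega),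
    SimpleGraph.nonempty_iso_iff_exists_eq_comap]
  simp only [completeWithLeafAt_comap]
  constructor
  · rintro ⟨e, rfl⟩
    exact ⟨_, _, e.symm.injective.ne (by simp [Fin.ext_iff]; omega), rfl⟩
  · rintro ⟨p, q, hpq, rfl⟩
    obtain ⟨e, hp, hq⟩ := (Fintype.equivFin V).exists_apply_eq_apply_eq hpq
      (i := ⟨Fintype.card V - 1, by omega⟩) (j := ⟨0, by omega⟩) (by simp [Fin.ext_iff]; omega)
    exact ⟨e, by rw [← hp, ← hq, e.symm_apply_apply, e.symm_apply_apply]⟩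

theorem nonempty_iso_completeMinusEdge_iff (hn : 2 ≤ Fintype.card V) :
    Nonempty (G ≃g completeMinusEdge (Fintype.card V)) ↔
      ∃ a b, a ≠ b ∧ G = completeMinusEdgeAt a b := by
  classical
  rw [completeMinusEdge_eq_completeMinusEdgeAt hn, SimpleGraph.nonempty_iso_iff_exists_eq_comap]
  simp only [completeMinusEdgeAt_comap]
  constructor
  · rintro ⟨e, rfl⟩
    exact ⟨_, _, e.symm.injective.ne (by simp [Fin.ext_iff]), rfl⟩
  · rintro ⟨a, b, hab, rfl⟩
    obtain ⟨e, ha, hb⟩ := (Fintype.equivFin V).exists_apply_eq_apply_eq hab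
      (i := ⟨0, by omega⟩) (j := ⟨1, hn⟩) (by simp [Fin.ext_iff])
    exact ⟨e, by rw [← ha, ← hb, e.symm_apply_apply, e.symm_apply_apply]⟩

end Iso

end LF

theorem stmt19 {V : Type*} [Fintype V] (G : SimpleGraph V) (hc : G.Connected)
    (hn : 3 ≤ Fintype.card V) :
    LF.leakyForcingNumber G 1 = Fintype.card V - 1 ↔
      (Nonempty (G ≃g (⊤ : SimpleGraph (Fin (Fintype.card V)))) ∨
       Nonempty (G ≃g LF.starGraph (Fintype.card V)) ∨
       Nonempty (G ≃g LF.completePlusLeaf (Fintype.card V)) ∨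
       Nonempty (G ≃g LF.completeMinusEdge (Fintype.card V))) := by
  obtain ⟨v, hv⟩ := hc.exists_nontrivial_neighborSet hn
  rw [LF.leakyForcingNumber_eq_card_sub_one_iff hv, LF.nonempty_iso_top_iff,
    LF.nonempty_iso_starGraph_iff (by omega), LF.nonempty_iso_completePlusLeaf_iff (by omega),
    LF.nonempty_iso_completeMinusEdge_iff (by omega)]
  refine ⟨LF.eq_of_hubsAreNearTwins hc hn, ?_⟩
  rintro (rfl | ⟨c, rfl⟩ | ⟨p, q, -, rfl⟩ | ⟨a, b, -, rfl⟩)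
  exacts [LF.hubsAreNearTwins_top, LF.hubsAreNearTwins_starAt c,
    LF.hubsAreNearTwins_completeWithLeafAt p q, LF.hubsAreNearTwins_completeMinusEdgeAt a b]
end
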